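/- arXiv:hep-th/0510149 — 4 statements merged into one kernel-verified Lean document; each statement's English description precedes it below -/
import Mathlib

section
/- Suppose coordinates Z_k, μ_k carry a Poisson bracket with {Z_k, Z_l} = 0, {μ_k, μ_l} = 0, and {Z_k, μ_l} = 0 for k ≠ l (each μ_k Poisson-commutes with all variables except Z_k). Let M_{km} = 1/(Z_k² - m²π²) be invertible, γ̃_k arbitrary smooth functions of (Z_k, μ_k) only, and Γ_m = ∑_k M^{-1}_{mk} γ̃_k. Then {Γ_m, Γ_n} = 0 for all m, n. -/
open Matrix

/-- In a Poisson algebra of functions with separated coordinates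
(Z_k, μ_k) — i.e. {Z_k, Z_l} = 0, {μ_k, μ_l} = 0, {Z_k, μ_l} = 0 for k ≠ l —
let M_{km} = 1/(Z_k² - m²π²) be invertible and γ̃_k functions of (Z_k, μ_k) only
(so they Poisson commute with all the other coordinates and with each other),
and set Γ = M⁻¹ γ̃. Then {Γ_m, Γ_n} = 0 for all m, n. -/
theorem stmt14 (A : Type*) [CommRing A] [Algebra ℝ A]
    (b : A → A → A)
    (hadd : ∀ f g h : A, b f (g + h) = b f g + b f h)
    (hskew : ∀ f g : A, b f g = -b g f)
    (hleib : ∀ f g h : A, b f (g * h) = b f g * h + g * b f h)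
    (hconst : ∀ (r : ℝ) (f : A), b (algebraMap ℝ A r) f = 0)
    (n : ℕ) (Zc μc γ : Fin n → A)
    (hZZ : ∀ k l, b (Zc k) (Zc l) = 0)
    (hμμ : ∀ k l, b (μc k) (μc l) = 0)
    (hZμ : ∀ k l, k ≠ l → b (Zc k) (μc l) = 0)
    (hγZ : ∀ k l, k ≠ l → b (γ k) (Zc l) = 0)
    (hγμ : ∀ k l, k ≠ l → b (γ k) (μc l) = 0)
    (hγγ : ∀ k l, b (γ k) (γ l) = 0)
    (M : Matrix (Fin n) (Fin n) A)
    (hM : ∀ k m : Fin n,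
      M k m * (Zc k ^ 2 - algebraMap ℝ A ((((m : ℕ) : ℝ) + 1) ^ 2 * Real.pi ^ 2)) = 1)
    (hMinv : IsUnit M.det) :
    ∀ m' n' : Fin n, b ((M⁻¹ *ᵥ γ) m') ((M⁻¹ *ᵥ γ) n') = 0 := by
  classical
  -- basic consequences of the axioms
  have hb0 : ∀ f : A, b f 0 = 0 := by
    intro f
    have h := hadd f 0 0
    rw [add_zero] at h
    exact (left_eq_add.mp h)
  have hb1 : ∀ f : A, b f 1 = 0 := by
    intro f
    have h := hconst 1 f
    rw [_root_.map_one] at h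
    rw [hskew, h, neg_zero]
  have hconst' : ∀ (r : ℝ) (f : A), b f (algebraMap ℝ A r) = 0 := by
    intro r f
    rw [hskew, hconst, neg_zero]
  have hsum : ∀ (f : A) (g : Fin n → A), b f (∑ x, g x) = ∑ x, b f (g x) := by
    intro f g
    exact map_sum ({ toFun := b f, map_zero' := hb0 f, map_add' := hadd f } : A →+ A) g
      Finset.univ
  have hneg : ∀ f y : A, b f (-y) = - b f y := by
    intro f y
    have h := hadd f y (-y)
    rw [add_neg_cancel, hb0] at h
    exact eq_neg_of_add_eq_zero_right h.symm
  have hsub : ∀ f x y : A, b f (x - y) = b f x - b f y := by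
    intro f x y
    rw [sub_eq_add_neg, hadd, hneg, ← sub_eq_add_neg]
  have hinv : ∀ (f u v : A), u * v = 1 → b f u = -(u ^ 2 * b f v) := by
    intro f u v huv
    have h1 : b f u * v + u * b f v = 0 := by
      rw [← hleib, huv, hb1]
    linear_combination u * h1 - b f u * huv
  -- derivative of the entries of M
  have bM : ∀ (f : A) (k m : Fin n),
      b f (M k m) = -(2 * Zc k * (M k m) ^ 2 * b f (Zc k)) := by
    intro f k m
    have h := hinv f (M k m) _ (hM k m)
    have h2 : b f (Zc k ^ 2 - algebraMap ℝ A ((((m : ℕ) : ℝ) + 1) ^ 2 * Real.pi ^ 2))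
        = 2 * Zc k * b f (Zc k) := by
      rw [hsub, hconst', sub_zero, sq, hleib]; ring
    rw [h2] at h
    rw [h]; ring
  set P : Matrix (Fin n) (Fin n) A := M⁻¹ with hPdef
  have hMP : M * P = 1 := Matrix.mul_nonsing_inv M hMinv
  have hPM : P * M = 1 := Matrix.nonsing_inv_mul M hMinv
  have hone : ∀ (f : A) (i j : Fin n), b f ((1 : Matrix (Fin n) (Fin n) A) i j) = 0 := by
    intro f i j
    by_cases h : i = j <;> simp [Matrix.one_apply, h, hb0 f, hb1 f]
  -- derivative relation for the inverse matrix
  have hrel : ∀ (f : A) (x y : Fin n),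
      ∑ c, M x c * b f (P c y) = -∑ c, b f (M x c) * P c y := by
    intro f x y
    have he : (M * P) x y = (1 : Matrix (Fin n) (Fin n) A) x y := by rw [hMP]
    have h := congrArg (b f) he
    rw [Matrix.mul_apply, hsum, hone] at h
    have h2 : (∑ c, b f (M x c) * P c y) + ∑ c, M x c * b f (P c y) = 0 := by
      rw [← Finset.sum_add_distrib, ← h]
      exact Finset.sum_congr rfl (fun c _ => (hleib f _ _).symm)
    exact eq_neg_of_add_eq_zero_right h2
  have hdP : ∀ (f : A) (i y : Fin n),
      b f (P i y) = -∑ x, P i x * ∑ c, b f (M x c) * P c y := by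
    intro f i y
    have h0 : b f (P i y) = ∑ x, (P * M) i x * b f (P x y) := by
      rw [hPM]
      simp [Matrix.one_apply, ite_mul]
    rw [h0]
    calc ∑ x, (P * M) i x * b f (P x y)
        = ∑ x, ∑ c, P i c * (M c x * b f (P x y)) := by
          refine Finset.sum_congr rfl fun x _ => ?_
          rw [Matrix.mul_apply, Finset.sum_mul]
          exact Finset.sum_congr rfl fun c _ => by ring
      _ = ∑ c, P i c * ∑ x, M c x * b f (P x y) := by
          rw [Finset.sum_comm]
          exact Finset.sum_congr rfl fun c _ => (Finset.mul_sum _ _ _).symm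
      _ = ∑ c, P i c * (-∑ x, b f (M c x) * P x y) :=
          Finset.sum_congr rfl fun c _ => by rw [hrel]
      _ = -∑ x, P i x * ∑ c, b f (M x c) * P c y := by
          rw [← Finset.sum_neg_distrib]
          exact Finset.sum_congr rfl fun c _ => by ring
  -- Z's commute with the entries of P
  have hZP : ∀ (j i y : Fin n), b (Zc j) (P i y) = 0 := by
    intro j i y
    rw [hdP]
    simp [bM, hZZ]
  have hPZ : ∀ (a b' x : Fin n), b (P a b') (Zc x) = 0 := by
    intro a b' x
    rw [hskew, hZP, neg_zero]
  -- entries of P commute with each other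
  have hPP : ∀ (a b' i y : Fin n), b (P a b') (P i y) = 0 := by
    intro a b' i y
    rw [hdP]
    simp [bM, hPZ]
  -- the bracket of γ k with entries of P has rank-one structure
  set q : Fin n → Fin n → A := fun k c => b (γ k) (M k c) with hq
  have hγM : ∀ (k x c : Fin n), x ≠ k → b (γ k) (M x c) = 0 := by
    intro k x c hx
    rw [bM, hγZ k x hx.symm, mul_zero, neg_zero]
  have hγP : ∀ (k i y : Fin n),
      b (γ k) (P i y) = -(P i k * ∑ c, q k c * P c y) := by
    intro k i y
    rw [hdP, neg_inj]
    rw [Finset.sum_eq_single k]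
    · intro x _ hx
      have hz : ∀ c, b (γ k) (M x c) * P c y = 0 := fun c => by
        rw [hγM k x c hx, zero_mul]
      simp [hz]
    · intro h; exact absurd (Finset.mem_univ k) h
  -- final computation
  intro m' n'
  have hΓ : ∀ i : Fin n, (P *ᵥ γ) i = ∑ k, P i k * γ k := by
    intro i
    simp [Matrix.mulVec, dotProduct]
  set S : Fin n → A := fun k => ∑ l, (∑ c, q k c * P c l) * γ l with hS
  have hGP : ∀ l, b (∑ k, P m' k * γ k) (P n' l)
      = -∑ k, P m' k * P n' k * ∑ c, q k c * P c l := by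
    intro l
    rw [hskew, hsum]
    have h : ∀ k, b (P n' l) (P m' k * γ k)
        = P m' k * (P n' k * ∑ c, q k c * P c l) := by
      intro k
      rw [hleib, hPP, zero_mul, zero_add, hskew (P n' l) (γ k), hγP, neg_neg]
    have h2 : ∑ k, b (P n' l) (P m' k * γ k)
        = ∑ k, P m' k * P n' k * ∑ c, q k c * P c l :=
      Finset.sum_congr rfl fun k _ => by rw [h k]; ring
    rw [h2]
  have hGγ : ∀ l, b (∑ k, P m' k * γ k) (γ l) = P m' l * S l := by
    intro l
    rw [hskew, hsum]
    have h : ∀ k, b (γ l) (P m' k * γ k)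
        = -((P m' l * ∑ c, q l c * P c k) * γ k) := by
      intro k
      rw [hleib, hγP, hγγ, mul_zero, add_zero, neg_mul]
    have h2 : ∑ k, b (γ l) (P m' k * γ k)
        = ∑ k, -(P m' l * ((∑ c, q l c * P c k) * γ k)) :=
      Finset.sum_congr rfl fun k _ => by rw [h k]; ring
    rw [h2, Finset.sum_neg_distrib, neg_neg]
    simp only [hS]
    rw [Finset.mul_sum]
  rw [hΓ m', hΓ n', hsum]
  calc ∑ l, b (∑ k, P m' k * γ k) (P n' l * γ l)
      = ∑ l, ((-∑ k, P m' k * P n' k * ∑ c, q k c * P c l) * γ l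
          + P n' l * (P m' l * S l)) := by
        refine Finset.sum_congr rfl fun l _ => ?_
        rw [hleib, hGP, hGγ]
    _ = (∑ l, (-∑ k, P m' k * P n' k * ∑ c, q k c * P c l) * γ l)
          + ∑ l, P n' l * (P m' l * S l) := Finset.sum_add_distrib
    _ = 0 := by
        have e1 : ∑ l, (-∑ k, P m' k * P n' k * ∑ c, q k c * P c l) * γ l
            = -∑ k, P m' k * P n' k * S k := by
          have h : ∀ l, (-∑ k, P m' k * P n' k * ∑ c, q k c * P c l) * γ l
              = ∑ k, -(P m' k * P n' k * ((∑ c, q k c * P c l) * γ l)) := by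
            intro l
            rw [neg_mul, Finset.sum_mul, ← Finset.sum_neg_distrib]
            exact Finset.sum_congr rfl fun k _ => by ring
          calc ∑ l, (-∑ k, P m' k * P n' k * ∑ c, q k c * P c l) * γ l
              = ∑ l, ∑ k, -(P m' k * P n' k * ((∑ c, q k c * P c l) * γ l)) :=
                Finset.sum_congr rfl fun l _ => h l
            _ = ∑ k, ∑ l, -(P m' k * P n' k * ((∑ c, q k c * P c l) * γ l)) :=
                Finset.sum_comm
            _ = -∑ k, P m' k * P n' k * S k := by
                rw [← Finset.sum_neg_distrib]
                refine Finset.sum_congr rfl fun k _ => ?_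
                rw [Finset.sum_neg_distrib, neg_inj]
                simp only [hS]
                rw [← Finset.mul_sum]
        have e2 : ∑ l, P n' l * (P m' l * S l) = ∑ k, P m' k * P n' k * S k :=
          Finset.sum_congr rfl fun l _ => by ring
        rw [e1, e2, neg_add_cancel]
end

section
/- Under the same separated Poisson structure, with η_m = ∑_k M^{-1}_{mk}·1 depending only on the Z's, one has the symmetry {Γ_n, η_m} = {Γ_m, η_n} for all m, n. -/
open Matrix

/-- Under the same separated Poisson structure as in Statement 14,
with η = M⁻¹ · (1,…,1)ᵀ (depending only on the Z's) and Γ = M⁻¹ γ̃, one has the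
symmetry {Γ_n, η_m} = {Γ_m, η_n} for all m, n. -/
theorem stmt15 (A : Type*) [CommRing A] [Algebra ℝ A]
    (b : A → A → A)
    (hadd : ∀ f g h : A, b f (g + h) = b f g + b f h)
    (hskew : ∀ f g : A, b f g = -b g f)
    (hleib : ∀ f g h : A, b f (g * h) = b f g * h + g * b f h)
    (hconst : ∀ (r : ℝ) (f : A), b (algebraMap ℝ A r) f = 0)
    (n : ℕ) (Zc μc γ : Fin n → A)
    (hZZ : ∀ k l, b (Zc k) (Zc l) = 0)
    (hμμ : ∀ k l, b (μc k) (μc l) = 0)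
    (hZμ : ∀ k l, k ≠ l → b (Zc k) (μc l) = 0)
    (hγZ : ∀ k l, k ≠ l → b (γ k) (Zc l) = 0)
    (hγμ : ∀ k l, k ≠ l → b (γ k) (μc l) = 0)
    (hγγ : ∀ k l, b (γ k) (γ l) = 0)
    (M : Matrix (Fin n) (Fin n) A)
    (hM : ∀ k m : Fin n,
      M k m * (Zc k ^ 2 - algebraMap ℝ A ((((m : ℕ) : ℝ) + 1) ^ 2 * Real.pi ^ 2)) = 1)
    (hMinv : IsUnit M.det) :
    ∀ m' n' : Fin n,
      b ((M⁻¹ *ᵥ γ) n') ((M⁻¹ *ᵥ (fun _ => (1 : A))) m') =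
      b ((M⁻¹ *ᵥ γ) m') ((M⁻¹ *ᵥ (fun _ => (1 : A))) n') := by
  intro m' n'
  set N := M⁻¹ with hNdef
  have hNM : N * M = 1 := Matrix.nonsing_inv_mul M hMinv
  have hMN : M * N = 1 := Matrix.mul_nonsing_inv M hMinv
  -- basic bracket facts
  have hb0 : ∀ f : A, b f 0 = 0 := by
    intro f
    have h := hadd f 0 0
    rw [add_zero] at h
    exact (left_eq_add.mp h)
  have hbconst : ∀ (f : A) (r : ℝ), b f (algebraMap ℝ A r) = 0 := by
    intro f r
    rw [hskew, hconst, neg_zero]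
  have hb1 : ∀ f : A, b f (1 : A) = 0 := by
    intro f
    rw [← map_one (algebraMap ℝ A)]
    exact hbconst f 1
  have hbsum : ∀ (f : A) (s : Finset (Fin n)) (g : Fin n → A),
      b f (∑ i ∈ s, g i) = ∑ i ∈ s, b f (g i) := by
    intro f s g
    exact map_sum (AddMonoidHom.mk' (b f) (hadd f)) g s
  have hbsum1 : ∀ (s : Finset (Fin n)) (g : Fin n → A) (h : A),
      b (∑ i ∈ s, g i) h = ∑ i ∈ s, b (g i) h := by
    intro s g h
    rw [hskew, hbsum, ← Finset.sum_neg_distrib]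
    exact Finset.sum_congr rfl fun i _ => (hskew (g i) h).symm
  have hleib1 : ∀ f g h : A, b (f * g) h = b f h * g + f * b g h := by
    intro f g h
    rw [hskew, hleib, hskew h f, hskew h g]
    ring
  -- bracket with entries of M
  have bM : ∀ (x : A) (p q : Fin n),
      b x (M p q) = -(M p q * M p q * (2 * Zc p * b x (Zc p))) := by
    intro x p q
    have hX : b x (Zc p ^ 2 - algebraMap ℝ A ((((q : ℕ) : ℝ) + 1) ^ 2 * Real.pi ^ 2))
        = 2 * Zc p * b x (Zc p) := by
      rw [sub_eq_add_neg, ← map_neg, hadd, hbconst, add_zero, sq, hleib]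
      ring
    have e1 : b x (M p q) *
          (Zc p ^ 2 - algebraMap ℝ A ((((q : ℕ) : ℝ) + 1) ^ 2 * Real.pi ^ 2)) +
        M p q * (2 * Zc p * b x (Zc p)) = 0 := by
      have h := congrArg (b x) (hM p q)
      rw [hleib, hX, hb1] at h
      exact h
    linear_combination M p q * e1 - b x (M p q) * hM p q
  -- bracket with entries of N = M⁻¹
  have bN : ∀ (x : A) (a c : Fin n),
      b x (N a c) = -∑ j, N a j * ∑ l, b x (M j l) * N l c := by
    intro x a c
    set DM : Matrix (Fin n) (Fin n) A := Matrix.of fun p q => b x (M p q) with hDM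
    set DN : Matrix (Fin n) (Fin n) A := Matrix.of fun p q => b x (N p q) with hDN
    have h1 : DN * M = -(N * DM) := by
      ext a' c'
      have h2 : b x ((N * M) a' c') = 0 := by
        rw [hNM, Matrix.one_apply]
        split_ifs
        · exact hb1 x
        · exact hb0 x
      rw [Matrix.mul_apply, hbsum] at h2
      simp only [hleib] at h2
      rw [Finset.sum_add_distrib] at h2
      simp only [Matrix.mul_apply, Matrix.neg_apply, hDM, hDN, Matrix.of_apply]
      exact eq_neg_of_add_eq_zero_left h2
    have h3 : DN = -(N * (DM * N)) := by
      calc DN = DN * (M * N) := by rw [hMN, Matrix.mul_one]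
        _ = (DN * M) * N := by rw [Matrix.mul_assoc]
        _ = (-(N * DM)) * N := by rw [h1]
        _ = -(N * (DM * N)) := by rw [Matrix.neg_mul, Matrix.mul_assoc]
      
    have h4 : DN a c = (-(N * (DM * N))) a c := by rw [← h3]
    simp only [Matrix.neg_apply, Matrix.mul_apply, hDN, hDM, Matrix.of_apply] at h4
    exact h4
  have bZN : ∀ (j a c : Fin n), b (Zc j) (N a c) = 0 := by
    intro j a c
    rw [bN]
    have : ∀ p q : Fin n, b (Zc j) (M p q) = 0 := by
      intro p q
      rw [bM, hZZ]
      ring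
    simp [this]
  have bNM : ∀ (a c p q : Fin n), b (N a c) (M p q) = 0 := by
    intro a c p q
    rw [bM, hskew (N a c) (Zc p), bZN]
    ring
  have bNN : ∀ (a c a' c' : Fin n), b (N a c) (N a' c') = 0 := by
    intro a c a' c'
    rw [bN]
    simp [bNM]
  have bγN : ∀ (k a c : Fin n),
      b (γ k) (N a c) = -(N a k * ∑ q, b (γ k) (M k q) * N q c) := by
    intro k a c
    rw [bN]
    rw [Finset.sum_eq_single k]
    · intro j _ hj
      have hz : ∀ q, b (γ k) (M j q) = 0 := by
        intro q
        rw [bM, hγZ k j (Ne.symm hj)]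
        ring
      simp [hz]
    · intro h
      exact absurd (Finset.mem_univ k) h
  -- the key computation
  have key : ∀ a c : Fin n,
      b ((N *ᵥ γ) a) ((N *ᵥ fun _ => (1 : A)) c)
      = ∑ k, N a k * N c k * ∑ l, -(∑ q, b (γ k) (M k q) * N q l) := by
    intro a c
    have hΓ : (N *ᵥ γ) a = ∑ k, N a k * γ k := by
      simp [Matrix.mulVec, dotProduct]
    have hη : (N *ᵥ fun _ => (1 : A)) c = ∑ l, N c l := by
      simp [Matrix.mulVec, dotProduct]
    rw [hΓ, hη]
    calc b (∑ k, N a k * γ k) (∑ l, N c l)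
        = ∑ l, ∑ k, b (N a k * γ k) (N c l) := by
          rw [hbsum]
          exact Finset.sum_congr rfl fun l _ => hbsum1 _ _ _
      _ = ∑ k, ∑ l, N a k * b (γ k) (N c l) := by
          rw [Finset.sum_comm]
          refine Finset.sum_congr rfl fun k _ => Finset.sum_congr rfl fun l _ => ?_
          rw [hleib1, bNN]
          ring
      _ = ∑ k, ∑ l, N a k * N c k * -(∑ q, b (γ k) (M k q) * N q l) := by
          refine Finset.sum_congr rfl fun k _ => Finset.sum_congr rfl fun l _ => ?_
          rw [bγN]
          ring
      _ = ∑ k, N a k * N c k * ∑ l, -(∑ q, b (γ k) (M k q) * N q l) := by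
          exact Finset.sum_congr rfl fun k _ => (Finset.mul_sum _ _ _).symm
  rw [key n' m', key m' n']
  exact Finset.sum_congr rfl fun k _ => by ring
end

section
/- Suppose quantities Γ_m, η_m, and a constant C satisfy {Γ_n, Γ_m} = 0, {η_n, η_m} = 0, {Γ_n, η_m} = {Γ_m, η_n}, and C = (1/η(p₀)) ∑_l Γ_l/(p₀² - π²l²) with η(p₀) = 1 - ∑_l η_l/(p₀² - π²l²). Then the Hamiltonians H_m = Γ_m + C η_m pairwise Poisson commute: {H_n, H_m} = 0. -/
open Real

/-- Suppose the quantities Γ_m, η_m and C satisfy {Γ_n, Γ_m} = 0,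
{η_n, η_m} = 0, {Γ_n, η_m} = {Γ_m, η_n}, and C = (1/η(p₀)) ∑_l Γ_l/(p₀² - π²l²)
with η(p₀) = 1 - ∑_l η_l/(p₀² - π²l²) invertible. Then the Hamiltonians
H_m = Γ_m + C η_m pairwise Poisson commute. -/
theorem stmt16 (A : Type*) [CommRing A] [Algebra ℝ A]
    (b : A → A → A)
    (hadd : ∀ f g h : A, b f (g + h) = b f g + b f h)
    (hskew : ∀ f g : A, b f g = -b g f)
    (hleib : ∀ f g h : A, b f (g * h) = b f g * h + g * b f h)
    (hconst : ∀ (r : ℝ) (f : A), b (algebraMap ℝ A r) f = 0)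
    (S : Finset ℕ) (Γ η : ℕ → A) (p₀ : ℝ)
    (hp₀ : ∀ l ∈ S, p₀ ^ 2 ≠ Real.pi ^ 2 * (l : ℝ) ^ 2)
    (hΓΓ : ∀ n m, b (Γ n) (Γ m) = 0)
    (hηη : ∀ n m, b (η n) (η m) = 0)
    (hsym : ∀ n m, b (Γ n) (η m) = b (Γ m) (η n))
    (C ηp₀ : A)
    (hηp₀ : ηp₀ = 1 - ∑ l ∈ S, algebraMap ℝ A (1 / (p₀ ^ 2 - Real.pi ^ 2 * (l : ℝ) ^ 2)) * η l)
    (hunit : IsUnit ηp₀)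
    (hC : C * ηp₀ = ∑ l ∈ S, algebraMap ℝ A (1 / (p₀ ^ 2 - Real.pi ^ 2 * (l : ℝ) ^ 2)) * Γ l) :
    ∀ n ∈ S, ∀ m ∈ S, b (Γ n + C * η n) (Γ m + C * η m) = 0 := by
  intro n hn m hm
  -- derived bracket rules
  have hadd' : ∀ f g h : A, b (f + g) h = b f h + b g h := by
    intro f g h; rw [hskew, hadd, hskew h f, hskew h g]; ring
  have hleib' : ∀ f g h : A, b (f * g) h = b f h * g + f * b g h := by
    intro f g h; rw [hskew, hleib, hskew h f, hskew h g]; ring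
  have hone : ∀ f : A, b f 1 = 0 := by
    intro f
    rw [hskew, ← map_one (algebraMap ℝ A), hconst, neg_zero]
  have hconst' : ∀ (r : ℝ) (f : A), b f (algebraMap ℝ A r) = 0 := by
    intro r f; rw [hskew, hconst, neg_zero]
  have hCC : b C C = 0 := by
    have h2 : algebraMap ℝ A 2 * b C C = 0 := by
      rw [map_ofNat, two_mul]
      nth_rewrite 1 [hskew C C]
      ring
    have hu2 : IsUnit (algebraMap ℝ A 2) :=
      (isUnit_iff_ne_zero.mpr two_ne_zero).map (algebraMap ℝ A)
    exact (hu2.mul_right_eq_zero).mp h2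
  have hbsub : ∀ f g h : A, b f (g - h) = b f g - b f h := by
    intro f g h
    exact map_sub (AddMonoidHom.mk' (b f) (hadd f)) g h
  have hbsum : ∀ (f : A) (T : Finset ℕ) (G : ℕ → A),
      b f (∑ l ∈ T, G l) = ∑ l ∈ T, b f (G l) := by
    intro f T G
    exact map_sum (AddMonoidHom.mk' (b f) (hadd f)) G T
  -- key expansion lemmas
  have K1 : ∀ k, b (Γ k + C * η k) C = b (Γ k) C - C * b C (η k) := by
    intro k
    rw [hadd', hleib', hCC, hskew (η k) C]; ring
  have K2 : ∀ k j, b (Γ k + C * η k) (Γ j)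
      = -(b (Γ j) C * η k) - C * b (Γ k) (η j) := by
    intro k j
    rw [hadd', hΓΓ k j, hskew (C * η k) (Γ j), hleib, hsym j k]; ring
  have K3 : ∀ k j, b (Γ k + C * η k) (η j)
      = b (Γ k) (η j) + b C (η j) * η k := by
    intro k j
    rw [hadd', hskew (C * η k) (η j), hleib, hηη j k, hskew (η j) C]; ring
  -- Step B : D_k * ηp₀ = -(∑ c_l D_l) * η_k
  have stepB : ∀ k, (b (Γ k) C - C * b C (η k)) * ηp₀
      = -((∑ l ∈ S, algebraMap ℝ A (1 / (p₀ ^ 2 - Real.pi ^ 2 * (l : ℝ) ^ 2)) *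
          (b (Γ l) C - C * b C (η l))) * η k) := by
    intro k
    have h1 : b (Γ k + C * η k) (C * ηp₀)
        = (b (Γ k) C - C * b C (η k)) * ηp₀ + C * b (Γ k + C * η k) ηp₀ := by
      rw [hleib, K1]
    have h2 : b (Γ k + C * η k) ηp₀
        = -∑ l ∈ S, algebraMap ℝ A (1 / (p₀ ^ 2 - Real.pi ^ 2 * (l : ℝ) ^ 2)) *
            (b (Γ k) (η l) + b C (η l) * η k) := by
      rw [hηp₀, hbsub, hone, hbsum, zero_sub]
      refine neg_inj.mpr (Finset.sum_congr rfl fun l _ => ?_)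
      rw [hleib, hconst', K3 k l]; ring
    have h3 : b (Γ k + C * η k) (C * ηp₀)
        = ∑ l ∈ S, algebraMap ℝ A (1 / (p₀ ^ 2 - Real.pi ^ 2 * (l : ℝ) ^ 2)) *
            (-(b (Γ l) C * η k) - C * b (Γ k) (η l)) := by
      rw [hC, hbsum]
      refine Finset.sum_congr rfl fun l _ => ?_
      rw [hleib, hconst', K2 k l]; ring
    have hcomb : (∑ l ∈ S, algebraMap ℝ A (1 / (p₀ ^ 2 - Real.pi ^ 2 * (l : ℝ) ^ 2)) *
            (-(b (Γ l) C * η k) - C * b (Γ k) (η l)))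
        + C * (∑ l ∈ S, algebraMap ℝ A (1 / (p₀ ^ 2 - Real.pi ^ 2 * (l : ℝ) ^ 2)) *
            (b (Γ k) (η l) + b C (η l) * η k))
        + (∑ l ∈ S, algebraMap ℝ A (1 / (p₀ ^ 2 - Real.pi ^ 2 * (l : ℝ) ^ 2)) *
            (b (Γ l) C - C * b C (η l))) * η k = 0 := by
      rw [Finset.mul_sum, Finset.sum_mul, ← Finset.sum_add_distrib,
        ← Finset.sum_add_distrib]
      refine Finset.sum_eq_zero fun l _ => ?_
      ring
    linear_combination h3 - h1 + hcomb - C * h2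
  obtain ⟨u, hu⟩ := hunit
  have hDn : ∀ k, b (Γ k) C - C * b C (η k)
      = -((∑ l ∈ S, algebraMap ℝ A (1 / (p₀ ^ 2 - Real.pi ^ 2 * (l : ℝ) ^ 2)) *
          (b (Γ l) C - C * b C (η l))) * η k) * ↑u⁻¹ := by
    intro k
    calc b (Γ k) C - C * b C (η k)
        = (b (Γ k) C - C * b C (η k)) * ηp₀ * ↑u⁻¹ := by
          rw [← hu, mul_assoc, Units.mul_inv, mul_one]
      _ = _ := by rw [stepB k]
  rw [hadd, K2 n m, hleib, K1 n, K3 n m]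
  linear_combination η m * hDn n - η n * hDn m
end

section
/- Define Φ(x) = Θ(x)^{-1} W(x) where Θ is invertible on an interval. Then Φ satisfies the coupled nonlinear system Φ'' + 2(⟨Φ, E⟩)'Φ + K²Φ = 0, where ⟨Φ, E⟩(x) = ∑_m Φ_m(x)E_m(x) and K = diag(mπ). Consequently, the function ψ(x) = U(x) - ⟨V(x), Θ(x)^{-1}W(x)⟩, with U'' = -Z²U and V_m = (U E_m' - U' E_m)/(Z² - m²π²), satisfies the Schrödinger equation -ψ'' - 2(⟨E,Φ⟩)' ψ = Z² ψ. -/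
/-!
If `f'' = -a f` and `g'' = -b g` with `a ≠ b`, the Wronskian quotient `(f g' - f' g) / (a - b)` is a
primitive of `f g`; hence `Θ'_{km} = W_k E_m` and `V_m' = U E_m`. For any `f` with `f'' = -a f`
put `T_f = ∑ₘ Vᶠₘ Φₘ` with `Vᶠₘ = (f E_m' - f' E_m) / (a - m²π²)`. Expanding `T_f''` by Leibniz
and using `Vᶠₘ (a - m²π²) = f E_m' - f' E_m` gives, with `S = ⟨Φ, E⟩'`,
  `∑ₘ Vᶠₘ (Φₘ'' + 2 S Φₘ + m²π² Φₘ) = T_f'' + a T_f - 2 S (f - T_f)`.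
For `f = W_k` we have `T_f = (ΘΦ)_k = W_k`, so the right side vanishes and the invertibility of `Θ`
gives the nonlinear system. For `f = U` the left side vanishes by the system, and since
`ψ = U - T_U` the identity is the Schrödinger equation for `ψ`.
-/

open Matrix Filter Topology

section SecondDerivative

variable {𝕜 : Type*} [NontriviallyNormedField 𝕜] {G : Type*} [NormedAddCommGroup G]
  [NormedSpace 𝕜 G] {𝔸 : Type*} [NormedCommRing 𝔸] [NormedAlgebra 𝕜 𝔸] {x : 𝕜}

theorem ContDiffAt.differentiableAt_deriv {f : 𝕜 → G} (hf : ContDiffAt 𝕜 2 f x) :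
    DifferentiableAt 𝕜 (deriv f) x :=
  ((hf.fderiv_right (m := 1) (by norm_num)).clm_apply contDiffAt_const).differentiableAt
    one_ne_zero

theorem deriv_deriv_eq_iteratedDeriv_two (f : 𝕜 → G) : deriv (deriv f) = iteratedDeriv 2 f := by
  rw [iteratedDeriv_succ, iteratedDeriv_one]

variable {f g : 𝕜 → 𝔸}

theorem deriv_deriv_mul (hf : ContDiffAt 𝕜 2 f x) (hg : ContDiffAt 𝕜 2 g x) :
    deriv (deriv fun y => f y * g y) x =
      deriv (deriv f) x * g x + 2 * (deriv f x * deriv g x) + f x * deriv (deriv g) x := by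
  have hderiv : deriv (fun y => f y * g y) =ᶠ[𝓝 x]
      fun y => deriv f y * g y + f y * deriv g y := by
    filter_upwards [hf.eventually (by simp), hg.eventually (by simp)] with y hfy hgy
    exact deriv_mul (hfy.differentiableAt two_ne_zero) (hgy.differentiableAt two_ne_zero)
  rw [hderiv.deriv_eq, ((hf.differentiableAt_deriv.hasDerivAt.fun_mul
    (hg.differentiableAt two_ne_zero).hasDerivAt).fun_add
    ((hf.differentiableAt two_ne_zero).hasDerivAt.fun_mul
      hg.differentiableAt_deriv.hasDerivAt)).deriv]
  ring

end SecondDerivative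

section Oscillator

variable {𝕜 : Type*} [NontriviallyNormedField 𝕜] {F : Type*} [NontriviallyNormedField F]
  [NormedAlgebra 𝕜 F] {a b : F} {f g : 𝕜 → F}

def SolvesOscillatorEq (a : F) (f : 𝕜 → F) : Prop :=
  Differentiable 𝕜 f ∧ Differentiable 𝕜 (deriv f) ∧ ∀ x, deriv (deriv f) x = -a * f x

theorem SolvesOscillatorEq.hasDerivAt_deriv (h : SolvesOscillatorEq a f) (x : 𝕜) :
    HasDerivAt (deriv f) (-a * f x) x :=
  h.2.2 x ▸ (h.2.1 x).hasDerivAt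

theorem solvesOscillatorEq_deriv (h : SolvesOscillatorEq a f) :
    SolvesOscillatorEq a (deriv f) := by
  have hf'' : deriv (deriv f) = fun x => -a * f x := funext h.2.2
  refine ⟨h.2.1, ?_, fun x => ?_⟩ <;> rw [hf'']
  · exact h.1.const_mul _
  · exact deriv_const_mul _ (h.1 x)

theorem SolvesOscillatorEq.contDiff (h : SolvesOscillatorEq a f) : ContDiff 𝕜 2 f := by
  rw [show (2 : WithTop ℕ∞) = 1 + 1 from rfl, contDiff_succ_iff_deriv]
  refine ⟨h.1, by simp, ?_⟩
  rw [contDiff_one_iff_deriv, funext h.2.2]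
  exact ⟨h.2.1, continuous_const.mul h.1.continuous⟩

theorem solvesOscillatorEq_ofReal_mul_sin (C ω : ℝ) :
    SolvesOscillatorEq ((ω : ℂ) ^ 2) fun x : ℝ => ((C * Real.sin (ω * x) : ℝ) : ℂ) := by
  have hsin : ∀ x, HasDerivAt (fun x : ℝ => ((C * Real.sin (ω * x) : ℝ) : ℂ))
      ((C * ω * Real.cos (ω * x) : ℝ) : ℂ) x := fun x =>
    ((((Real.hasDerivAt_sin _).comp x ((hasDerivAt_id x).const_mul ω)).const_mul C).congr_deriv
      (by simp; ring)).ofReal_comp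
  have hcos : ∀ x, HasDerivAt (fun x : ℝ => ((C * ω * Real.cos (ω * x) : ℝ) : ℂ))
      (-(ω : ℂ) ^ 2 * ((C * Real.sin (ω * x) : ℝ) : ℂ)) x := fun x =>
    ((((Real.hasDerivAt_cos _).comp x ((hasDerivAt_id x).const_mul ω)).const_mul
      (C * ω)).ofReal_comp).congr_deriv (by simp; ring)
  have hderiv : deriv (fun x : ℝ => ((C * Real.sin (ω * x) : ℝ) : ℂ)) =
      fun x => ((C * ω * Real.cos (ω * x) : ℝ) : ℂ) := funext fun x => (hsin x).deriv
  refine ⟨fun x => (hsin x).differentiableAt, ?_, fun x => ?_⟩ <;> rw [hderiv]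
  · exact fun x => (hcos x).differentiableAt
  · exact (hcos x).deriv

noncomputable def wronskian (f g : 𝕜 → F) (y : 𝕜) : F := f y * deriv g y - deriv f y * g y

theorem SolvesOscillatorEq.hasDerivAt_wronskian (hf : SolvesOscillatorEq a f)
    (hg : SolvesOscillatorEq b g) (x : 𝕜) :
    HasDerivAt (wronskian f g) ((a - b) * (f x * g x)) x :=
  (((hf.1 x).hasDerivAt.fun_mul (hg.hasDerivAt_deriv x)).fun_sub
    ((hf.hasDerivAt_deriv x).fun_mul (hg.1 x).hasDerivAt)).congr_deriv (by ring)

theorem SolvesOscillatorEq.deriv_wronskian_div (hf : SolvesOscillatorEq a f)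
    (hg : SolvesOscillatorEq b g) (hab : a ≠ b) :
    deriv (fun y => wronskian f g y / (a - b)) = fun y => f y * g y := by
  funext x
  rw [((hf.hasDerivAt_wronskian hg x).div_const _).deriv,
    mul_div_cancel_left₀ _ (sub_ne_zero.mpr hab)]

theorem SolvesOscillatorEq.contDiff_wronskian (hf : SolvesOscillatorEq a f)
    (hg : SolvesOscillatorEq b g) : ContDiff 𝕜 2 (wronskian f g) :=
  (hf.contDiff.mul (solvesOscillatorEq_deriv hg).contDiff).sub
    ((solvesOscillatorEq_deriv hf).contDiff.mul hg.contDiff)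

end Oscillator

section Cramer

variable {𝕜 : Type*} [NontriviallyNormedField 𝕜] {F : Type*} [NormedField F]
  [NormedAlgebra 𝕜 F] {ι : Type*} [Fintype ι] [DecidableEq ι] {x : 𝕜} {n : WithTop ℕ∞}

theorem Matrix.inv_mulVec_eq_inv_det_smul_cramer {K : Type*} [Field K] (A : Matrix ι ι K)
    (b : ι → K) : A⁻¹ *ᵥ b = A.det⁻¹ • cramer A b := by
  rw [inv_def, Ring.inverse_eq_inv', smul_mulVec, cramer_eq_adjugate_mulVec]

theorem ContDiffAt.matrix_det {R : Type*} [NormedCommRing R] [NormedAlgebra 𝕜 R]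
    {M : 𝕜 → Matrix ι ι R} (hM : ∀ i j, ContDiffAt 𝕜 n (fun y => M y i j) x) :
    ContDiffAt 𝕜 n (fun y => (M y).det) x := by
  simp only [det_apply']
  exact ContDiffAt.sum fun σ _ => contDiffAt_const.mul (contDiffAt_prod fun i _ => hM _ _)

theorem ContDiffAt.inv_mulVec_apply {M : 𝕜 → Matrix ι ι F} {b : 𝕜 → ι → F}
    (hM : ∀ i j, ContDiffAt 𝕜 n (fun y => M y i j) x) (hb : ∀ i, ContDiffAt 𝕜 n (fun y => b y i) x)
    (hdet : IsUnit (M x).det) (i : ι) : ContDiffAt 𝕜 n (fun y => ((M y)⁻¹ *ᵥ b y) i) x := by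
  simp only [inv_mulVec_eq_inv_det_smul_cramer, Pi.smul_apply, smul_eq_mul, cramer_apply]
  refine ((ContDiffAt.matrix_det hM).fun_inv hdet.ne_zero).mul (ContDiffAt.matrix_det fun j k => ?_)
  by_cases hk : k = i
  · subst hk; simpa only [updateCol_self] using hb j
  · simpa only [updateCol_ne hk] using hM j k

end Cramer

section NonlinearSystem

variable {𝕜 : Type*} [NontriviallyNormedField 𝕜] {F : Type*} [NontriviallyNormedField F]
  [NormedAlgebra 𝕜 F] {ι : Type*} [Fintype ι]

/-- `Φ'' + 2 ⟨Φ, E⟩' Φ + K² Φ` at `x`, where `c` is the diagonal of `K²`. -/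
noncomputable def nonlinearSystemLHS (c : ι → F) (E : ι → 𝕜 → F) (Φ : 𝕜 → ι → F) (x : 𝕜)
    (m : ι) : F :=
  deriv (deriv fun y => Φ y m) x + 2 * deriv (fun y => ∑ p, Φ y p * E p y) x * Φ x m +
    c m * Φ x m

/-- For `f = W_k` this is `(Θ Φ)_k`, for `f = U` it is `⟨V, Φ⟩`. -/
noncomputable def wronskianPairing (c : ι → F) (E : ι → 𝕜 → F) (Φ : 𝕜 → ι → F) (a : F)
    (f : 𝕜 → F) (y : 𝕜) : F :=
  ∑ m, wronskian f (E m) y / (a - c m) * Φ y m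

variable {c : ι → F} {E : ι → 𝕜 → F} {Φ : 𝕜 → ι → F} {x : 𝕜} {a : F} {f : 𝕜 → F}

theorem contDiffAt_wronskianPairing (hE : ∀ m, SolvesOscillatorEq (c m) (E m))
    (hf : SolvesOscillatorEq a f) (hΦ : ∀ m, ContDiffAt 𝕜 2 (fun y => Φ y m) x) :
    ContDiffAt 𝕜 2 (wronskianPairing c E Φ a f) x :=
  ContDiffAt.sum fun m _ =>
    ((hf.contDiff_wronskian (hE m)).div_const _).contDiffAt.mul (hΦ m)

theorem sum_wronskian_div_mul_nonlinearSystemLHS (hE : ∀ m, SolvesOscillatorEq (c m) (E m))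
    (hf : SolvesOscillatorEq a f) (ha : ∀ m, a ≠ c m)
    (hΦ : ∀ m, ContDiffAt 𝕜 2 (fun y => Φ y m) x) :
    ∑ m, wronskian f (E m) x / (a - c m) * nonlinearSystemLHS c E Φ x m =
      deriv (deriv (wronskianPairing c E Φ a f)) x + a * wronskianPairing c E Φ a f x -
        2 * deriv (fun y => ∑ p, Φ y p * E p y) x * (f x - wronskianPairing c E Φ a f x) := by
  set V : ι → 𝕜 → F := fun m y => wronskian f (E m) y / (a - c m)
  set S := deriv (fun y => ∑ p, Φ y p * E p y) x with hSdef
  have hV : ∀ m, ContDiffAt 𝕜 2 (V m) x := fun m =>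
    ((hf.contDiff_wronskian (hE m)).div_const _).contDiffAt
  have hV' : ∀ m, deriv (V m) = fun y => f y * E m y := fun m =>
    hf.deriv_wronskian_div (hE m) (ha m)
  have hV'' : ∀ m, deriv (deriv (V m)) x = deriv f x * E m x + f x * deriv (E m) x := fun m => by
    rw [hV' m]; exact deriv_mul (hf.1 x) ((hE m).1 x)
  have hVc : ∀ m, V m x * (a - c m) = f x * deriv (E m) x - deriv f x * E m x := fun m =>
    div_mul_cancel₀ _ (sub_ne_zero.mpr (ha m))
  have hS : S = ∑ p, (deriv (fun y => Φ y p) x * E p x + Φ x p * deriv (E p) x) := by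
    rw [hSdef, deriv_fun_sum fun p _ =>
      ((hΦ p).differentiableAt two_ne_zero).fun_mul ((hE p).1 x)]
    exact Finset.sum_congr rfl fun p _ =>
      deriv_mul ((hΦ p).differentiableAt two_ne_zero) ((hE p).1 x)
  have hT'' : deriv (deriv (wronskianPairing c E Φ a f)) x =
      ∑ m, (deriv (deriv (V m)) x * Φ x m + 2 * (deriv (V m) x * deriv (fun y => Φ y m) x) +
        V m x * deriv (deriv fun y => Φ y m) x) := by
    unfold wronskianPairing
    rw [deriv_deriv_eq_iteratedDeriv_two, iteratedDeriv_fun_sum fun m _ => (hV m).mul (hΦ m)]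
    exact Finset.sum_congr rfl fun m _ => by
      rw [← deriv_deriv_eq_iteratedDeriv_two]; exact deriv_deriv_mul (hV m) (hΦ m)
  have hterm : ∀ m, V m x * nonlinearSystemLHS c E Φ x m =
      (deriv (deriv (V m)) x * Φ x m + 2 * (deriv (V m) x * deriv (fun y => Φ y m) x) +
        V m x * deriv (deriv fun y => Φ y m) x) + a * (V m x * Φ x m) + 2 * S * (V m x * Φ x m) -
        2 * f x * (deriv (fun y => Φ y m) x * E m x + Φ x m * deriv (E m) x) := fun m => by
    rw [hV'' m, hV' m, nonlinearSystemLHS]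
    linear_combination (-Φ x m) * hVc m
  rw [Finset.sum_congr rfl fun m _ => hterm m, hT'']
  unfold wronskianPairing
  simp only [Finset.sum_add_distrib, Finset.sum_sub_distrib, ← Finset.mul_sum, ← hS]
  ring

theorem nonlinearSystemLHS_eq_zero [DecidableEq ι] {a : ι → F} {W : ι → 𝕜 → F}
    (hE : ∀ m, SolvesOscillatorEq (c m) (E m)) (hW : ∀ k, SolvesOscillatorEq (a k) (W k))
    (ha : ∀ k m, a k ≠ c m) (hΦ : ∀ m, ContDiffAt 𝕜 2 (fun y => Φ y m) x)
    (hΘΦ : ∀ k, wronskianPairing c E Φ (a k) (W k) =ᶠ[𝓝 x] W k) {Θ : Matrix ι ι F}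
    (hΘ : ∀ k m, Θ k m = wronskian (W k) (E m) x / (a k - c m)) (hdet : Θ.det ≠ 0) :
    nonlinearSystemLHS c E Φ x = 0 := by
  refine eq_zero_of_mulVec_eq_zero hdet (funext fun k => ?_)
  have key := sum_wronskian_div_mul_nonlinearSystemLHS hE (hW k) (ha k) hΦ
  rw [(hΘΦ k).deriv.deriv_eq, (hΘΦ k).eq_of_nhds, (hW k).2.2, sub_self, mul_zero, sub_zero,
    neg_mul, neg_add_cancel] at key
  simpa [mulVec, dotProduct, hΘ] using key

theorem schrodinger_of_nonlinearSystemLHS_eq_zero {ψ : 𝕜 → F}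
    (hE : ∀ m, SolvesOscillatorEq (c m) (E m)) (hf : SolvesOscillatorEq a f) (ha : ∀ m, a ≠ c m)
    (hΦ : ∀ m, ContDiffAt 𝕜 2 (fun y => Φ y m) x) (hsys : nonlinearSystemLHS c E Φ x = 0)
    (hψ : ψ = fun y => f y - wronskianPairing c E Φ a f y) :
    -deriv (deriv ψ) x - 2 * deriv (fun y => ∑ p, Φ y p * E p y) x * ψ x = a * ψ x := by
  have key := sum_wronskian_div_mul_nonlinearSystemLHS hE hf ha hΦ
  simp only [hsys, Pi.zero_apply, mul_zero, Finset.sum_const_zero] at key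
  subst hψ
  rw [deriv_deriv_eq_iteratedDeriv_two, iteratedDeriv_fun_sub hf.contDiff.contDiffAt
    (contDiffAt_wronskianPairing hE hf hΦ), ← deriv_deriv_eq_iteratedDeriv_two,
    ← deriv_deriv_eq_iteratedDeriv_two, hf.2.2]
  linear_combination -key

end NonlinearSystem

/-- With Θ invertible on an open interval I, define
Φ(x) = Θ(x)⁻¹ W(x). Then Φ satisfies Φ'' + 2(⟨Φ,E⟩)'Φ + K²Φ = 0, and
consequently ψ(x) = U(x) - ⟨V(x), Θ(x)⁻¹W(x)⟩, with U'' = -Z²U and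
V_m = (U E_m' - U' E_m)/(Z² - m²π²), satisfies -ψ'' - 2(⟨E,Φ⟩)'ψ = Z²ψ.
Here the indices m correspond to the positive integers m+1, m : Fin n, and
E_m(x) = 2(m+1)π sin((m+1)πx), K = diag((m+1)π). -/
theorem stmt19 (n : ℕ) (Z : Fin n → ℂ) (Zs : ℂ)
    (W : Fin n → ℝ → ℂ) (U : ℝ → ℂ) (E : Fin n → ℝ → ℂ)
    (hE : ∀ (m : Fin n) (x : ℝ),
      E m x = ((2 * (((m : ℕ) : ℝ) + 1) * Real.pi *
        Real.sin ((((m : ℕ) : ℝ) + 1) * Real.pi * x) : ℝ) : ℂ))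
    (hWdiff : ∀ k, Differentiable ℝ (W k))
    (hWdiff' : ∀ k, Differentiable ℝ (deriv (W k)))
    (hW : ∀ k x, deriv (deriv (W k)) x = -(Z k ^ 2) * W k x)
    (hUdiff : Differentiable ℝ U) (hUdiff' : Differentiable ℝ (deriv U))
    (hU : ∀ x, deriv (deriv U) x = -(Zs ^ 2) * U x)
    (hZm : ∀ (k m : Fin n),
      Z k ^ 2 ≠ ((((m : ℕ) : ℂ) + 1)) ^ 2 * (Real.pi : ℂ) ^ 2)
    (hZsm : ∀ m : Fin n, Zs ^ 2 ≠ ((((m : ℕ) : ℂ) + 1)) ^ 2 * (Real.pi : ℂ) ^ 2)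
    (Θ : ℝ → Matrix (Fin n) (Fin n) ℂ)
    (hΘ : ∀ (x : ℝ) (k m : Fin n),
      Θ x k m = (W k x * deriv (E m) x - deriv (W k) x * E m x) /
        (Z k ^ 2 - ((((m : ℕ) : ℂ) + 1)) ^ 2 * (Real.pi : ℂ) ^ 2))
    (I : Set ℝ) (hI : IsOpen I)
    (hdet : ∀ x ∈ I, IsUnit (Θ x).det)
    (Φ : ℝ → Fin n → ℂ)
    (hΦ : ∀ x : ℝ, Φ x = (Θ x)⁻¹ *ᵥ (fun k => W k x))
    (ψ : ℝ → ℂ)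
    (hψ : ∀ x : ℝ,
      ψ x = U x - ∑ m : Fin n,
        ((U x * deriv (E m) x - deriv U x * E m x) /
          (Zs ^ 2 - ((((m : ℕ) : ℂ) + 1)) ^ 2 * (Real.pi : ℂ) ^ 2)) * Φ x m) :
    (∀ m : Fin n, ∀ x ∈ I,
      deriv (deriv (fun y => Φ y m)) x +
        2 * deriv (fun y => ∑ p : Fin n, Φ y p * E p y) x * Φ x m +
        ((((m : ℕ) : ℂ) + 1)) ^ 2 * (Real.pi : ℂ) ^ 2 * Φ x m = 0) ∧
    (∀ x ∈ I,
      -(deriv (deriv ψ) x) -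
        2 * deriv (fun y => ∑ p : Fin n, E p y * Φ y p) x * ψ x = Zs ^ 2 * ψ x) := by
  set c : Fin n → ℂ := fun m => (((m : ℕ) : ℂ) + 1) ^ 2 * (Real.pi : ℂ) ^ 2
  have hEsol : ∀ m, SolvesOscillatorEq (c m) (E m) := fun m => by
    rw [funext (hE m)]
    convert solvesOscillatorEq_ofReal_mul_sin _ _ using 2
    push_cast
    ring
  have hWsol : ∀ k, SolvesOscillatorEq (Z k ^ 2) (W k) := fun k => ⟨hWdiff k, hWdiff' k, hW k⟩
  have hΘW : ∀ y k m, Θ y k m = wronskian (W k) (E m) y / (Z k ^ 2 - c m) := hΘ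
  have hΘΦ : ∀ y ∈ I, ∀ k, wronskianPairing c E Φ (Z k ^ 2) (W k) y = W k y := fun y hy k => by
    calc wronskianPairing c E Φ (Z k ^ 2) (W k) y = (Θ y *ᵥ Φ y) k := by
          simp only [wronskianPairing, mulVec, dotProduct, hΘW]
      _ = W k y := by rw [hΦ y, mulVec_mulVec, mul_nonsing_inv _ (hdet y hy), one_mulVec]
  have hΦsmooth : ∀ x ∈ I, ∀ m, ContDiffAt ℝ 2 (fun y => Φ y m) x := fun x hx m => by
    simp only [hΦ]
    refine ContDiffAt.inv_mulVec_apply (fun k m => ?_) (fun k => (hWsol k).contDiff.contDiffAt)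
      (hdet x hx) m
    simp only [hΘW]
    exact (((hWsol k).contDiff_wronskian (hEsol m)).div_const _).contDiffAt
  have hsys : ∀ x ∈ I, nonlinearSystemLHS c E Φ x = 0 := fun x hx =>
    nonlinearSystemLHS_eq_zero hEsol hWsol hZm (hΦsmooth x hx)
      (fun k => eventually_of_mem (hI.mem_nhds hx) fun y hy => hΘΦ y hy k) (hΘW x)
      (hdet x hx).ne_zero
  refine ⟨fun m x hx => congrFun (hsys x hx) m, fun x hx => ?_⟩
  simp_rw [mul_comm (E _ _)]
  exact schrodinger_of_nonlinearSystemLHS_eq_zero hEsol ⟨hUdiff, hUdiff', hU⟩ hZsm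
    (hΦsmooth x hx) (hsys x hx) (funext hψ)
end
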